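/- arXiv:2602.13077 — 3 statements merged into one kernel-verified Lean document; each statement's English description precedes it below -/
import Mathlib

section
/- Suppose M is an H-like set of successor type, Y ∈ M, and A is an assignment of a set A_y ∈ M to each y ∈ Y. Then the function y ↦ A_y, coded as the set of ordered pairs {⟨y, A_y⟩ : y ∈ Y}, belongs to M, and the union ⋃_{y∈Y} A_y belongs to M. -/
namespace NairianModels

open ZFSet

/-! ## Basic cardinality notions -/

/-- `f` codes a surjection from `X` onto `Y`: a set of Kuratowski ordered pairs that is a
function with domain `X` and values in `Y`, every element of `Y` being a value. -/
def ZFSurj (X Y f : ZFSet) : Prop :=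
  ZFSet.IsFunc X Y f ∧ ∀ y ∈ Y, ∃ x ∈ X, ZFSet.pair x y ∈ f

/-- `|X| ≲ |Y|`: either `X = ∅` or there is a surjection from `Y` onto `X`. -/
def CardLE (X Y : ZFSet) : Prop :=
  X = ∅ ∨ ∃ f, ZFSurj Y X f

/-- `|X| ≈ |Y|`. -/
def CardEq (X Y : ZFSet) : Prop :=
  CardLE X Y ∧ CardLE Y X

/-- `X` is a maximal cardinality of `M`: `X ∈ M` and every nonempty `Y ∈ M` is the image of a
surjection from `X` that belongs to `M`. -/
def IsMaxCard (X M : ZFSet) : Prop :=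
  X ∈ M ∧ ∀ Y ∈ M, Y = ∅ ∨ ∃ f ∈ M, ZFSurj X Y f

/-- `M` is of successor type: it has a maximal cardinality. -/
def SuccType (M : ZFSet) : Prop :=
  ∃ X, IsMaxCard X M

/-! ## Fullness -/

def TransClosed (M : ZFSet) : Prop :=
  ∀ Y ∈ M, ∃ Z ∈ M, Z.IsTransitive ∧ Z ⊆ M ∧ Y ∈ Z

def ProdClosed (M : ZFSet) : Prop :=
  ∀ X ∈ M, ∀ Y ∈ M, ZFSet.prod X Y ∈ M

def SubsetClosed (M : ZFSet) : Prop :=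
  ∀ X ∈ M, ZFSet.powerset X ⊆ M

def Full (M : ZFSet) : Prop :=
  TransClosed M ∧ ProdClosed M ∧ SubsetClosed M

/-! ## Ordinals, strong regularity, hierarchicality, H-likeness -/

/-- von Neumann ordinal: a transitive set linearly ordered by `∈`. -/
def IsOrd (x : ZFSet) : Prop :=
  x.IsTransitive ∧
    (∀ y ∈ x, ∀ z ∈ x, y ∈ z ∨ y = z ∨ z ∈ y) ∧
    (∀ a ∈ x, ∀ b ∈ x, ∀ c ∈ x, a ∈ b → b ∈ c → a ∈ c)

/-- limit (von Neumann) ordinal: a nonempty ordinal with no largest element. -/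
def IsLimitOrd (x : ZFSet) : Prop :=
  IsOrd x ∧ x ≠ ∅ ∧ ∀ y ∈ x, ∃ z ∈ x, y ∈ z

/-- `M` is strongly regular: any (set-coded) function from an `X ∈ M` to the ordinals
belonging to `M` is bounded by an ordinal in `M`. -/
def StronglyRegular (M : ZFSet) : Prop :=
  ∀ X ∈ M, ∀ f : ZFSet,
    (∀ p ∈ f, ∃ x ∈ X, ∃ o, IsOrd o ∧ o ∈ M ∧ p = ZFSet.pair x o) →
    (∀ x ∈ X, ∃ o, ZFSet.pair x o ∈ f) →
    (∀ x ∈ X, ∀ o o', ZFSet.pair x o ∈ f → ZFSet.pair x o' ∈ f → o = o') →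
    ∃ β, IsOrd β ∧ β ∈ M ∧ ∀ x ∈ X, ∀ o, ZFSet.pair x o ∈ f → o ∈ β

/-- `M` is hierarchical: it is the continuous increasing union, along the ordinals belonging
to `M`, of transitive sets belonging to `M`. -/
def Hierarchical (M : ZFSet) : Prop :=
  ∃ F : ZFSet → ZFSet,
    (∀ α, IsOrd α → α ∈ M → (F α).IsTransitive ∧ F α ∈ M) ∧
    (∀ α β, IsOrd α → IsOrd β → α ∈ M → β ∈ M → α ∈ β → F α ⊆ F β) ∧
    (∀ β, IsLimitOrd β → β ∈ M → ∀ x, x ∈ F β ↔ ∃ α ∈ β, x ∈ F α) ∧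
    (∀ x, x ∈ M ↔ ∃ α, IsOrd α ∧ α ∈ M ∧ x ∈ F α)

/-- `M` is H-like: transitive, full, hierarchical, and strongly regular in case it is of
successor type. -/
def HLike (M : ZFSet) : Prop :=
  M.IsTransitive ∧ Full M ∧ Hierarchical M ∧ (SuccType M → StronglyRegular M)

/-! ## Transitive closure and the classes `H_X` -/

/-- Iterated unions: `iterUnion x n = ⋃ⁿ x`. -/
def iterUnion (x : ZFSet) : ℕ → ZFSet
  | 0 => x
  | n + 1 => ZFSet.sUnion (iterUnion x n)

/-- The transitive closure of `x` (the least transitive set including `x`):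
`x ∪ ⋃x ∪ ⋃⋃x ∪ ⋯`. -/
noncomputable def transCl (x : ZFSet) : ZFSet :=
  ZFSet.sUnion (ZFSet.range fun n : ℕ => iterUnion x n)

/-- `Y ∈ H_X`: there is a surjection from `X` onto the transitive closure of `{Y}`. -/
def MemH (X Y : ZFSet) : Prop :=
  ∃ f, ZFSurj X (transCl ({Y} : ZFSet)) f

/-! ## First-order logic over `(W, ∈)` -/

/-- Formulas of the language of set theory, with variables indexed by `ℕ`. -/
inductive Fml : Type
  | mem : ℕ → ℕ → Fml
  | equal : ℕ → ℕ → Fml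
  | not : Fml → Fml
  | and : Fml → Fml → Fml
  | ex : ℕ → Fml → Fml

/-- Satisfaction of a formula in the structure `(D, ∈)` under the assignment `v`. -/
def Sat (D : ZFSet) : Fml → (ℕ → ZFSet) → Prop
  | .mem i j, v => v i ∈ v j
  | .equal i j, v => v i = v j
  | .not φ, v => ¬ Sat D φ v
  | .and φ ψ, v => Sat D φ v ∧ Sat D ψ v
  | .ex n φ, v => ∃ a, a ∈ D ∧ Sat D φ (Function.update v n a)

/-- `(X, ∈)` is an elementary substructure of `(W, ∈)`. -/
def ElemSub (X W : ZFSet) : Prop :=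
  X ⊆ W ∧ ∀ (φ : Fml) (v : ℕ → ZFSet), (∀ n, v n ∈ X) → (Sat X φ v ↔ Sat W φ v)

/-- `π` is an elementary embedding of `(M, ∈)` into `(W, ∈)`. -/
def IsElemEmb (M W : ZFSet) (π : ZFSet → ZFSet) : Prop :=
  (∀ x ∈ M, π x ∈ W) ∧
    ∀ (φ : Fml) (v : ℕ → ZFSet), (∀ n, v n ∈ M) →
      (Sat M φ v ↔ Sat W φ fun n => π (v n))

/-- `M` is `X`-closed: `X ∪ {X} ⊆ M` and every (set-coded) function from `X` into `M`
belongs to `M`. -/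
def XClosed (X M : ZFSet) : Prop :=
  X ⊆ M ∧ X ∈ M ∧ ∀ f, ZFSet.IsFunc X M f → f ∈ M

/-- `M` is definably closed: any subset of a transitive `N ∈ M` definable over `(N, ∈)` with
parameters in `N` belongs to `M`. -/
def DefClosed (M : ZFSet) : Prop :=
  ∀ N, N ∈ M → N.IsTransitive →
    ∀ (φ : Fml) (v : ℕ → ZFSet), (∀ n, v n ∈ N) →
      ∀ A : ZFSet, (∀ y, y ∈ A ↔ y ∈ N ∧ Sat N φ (Function.update v 0 y)) → A ∈ M

/-- The reflection principle `ref(X, Y, Z)`. -/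
def Ref (X Y Z : ZFSet) : Prop :=
  ∀ W a : ZFSet, W.IsTransitive → XClosed X W → Y ∈ W → a ∈ W →
    ∃ (M : ZFSet) (π : ZFSet → ZFSet),
      M.IsTransitive ∧ IsElemEmb M W π ∧ ({X, Y} : ZFSet) ∈ M ∧
      (∃ x ∈ M, π x = a) ∧ M ∈ Z ∧
      (∀ z, z ∈ X ∨ z ∈ Y ∨ z = X ∨ z = Y → π z = z) ∧ XClosed X M

/-! ## The N-hierarchy -/

/-- Hereditarily finite sets. -/
def HFin : ZFSet → Prop :=
  ZFSet.mem_wf.fix (C := fun _ => Prop) fun x IH =>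
    x.toSet.Finite ∧ ∀ y, ∀ h : y ∈ x, IH y h

/-- `F` is the N-hierarchy: `F 0` is the set of hereditarily finite sets, `F 1 = H_{F 0}`,
`F (α+2) = H_{F (α+1)}`, and for limit `α`, `F α = ⋃_{β<α} F β` and
`F (α+1) = H_{𝒫(F α)}`. -/
def IsNHierarchy (F : Ordinal → ZFSet) : Prop :=
  (∀ Y, Y ∈ F 0 ↔ HFin Y) ∧
  (∀ Y, Y ∈ F 1 ↔ MemH (F 0) Y) ∧
  (∀ α : Ordinal, ∀ Y, Y ∈ F (α + 2) ↔ MemH (F (α + 1)) Y) ∧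
  (∀ α : Ordinal, Order.IsSuccLimit α →
    (∀ Y, Y ∈ F α ↔ ∃ β < α, Y ∈ F β) ∧
    (∀ Y, Y ∈ F (α + 1) ↔ MemH (ZFSet.powerset (F α)) Y))

/-! ## Auxiliary product constructions -/

/-- Left-nested cartesian product `Y 0 × Y 1 × ⋯ × Y n`. -/
def nestedProd (Y : ℕ → ZFSet) : ℕ → ZFSet
  | 0 => Y 0
  | n + 1 => ZFSet.prod (nestedProd Y n) (Y (n + 1))

/-- Left-nested cartesian power `X^n` (with junk value `∅` at `n = 0`). -/
def nPow (X : ZFSet) : ℕ → ZFSet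
  | 0 => ∅
  | 1 => X
  | n + 2 => ZFSet.prod (nPow X (n + 1)) X

/-- `W` is `<κ`-closed: every function from an ordinal `η < κ` into `W` belongs to `W`. -/
def LtClosed (κ W : ZFSet) : Prop :=
  ∀ η ∈ κ, ∀ f, ZFSet.IsFunc η W f → f ∈ W

/-! ## Statement 4 -/

/-
Strong regularity bounds the hierarchy levels at which the sets `A y` appear by a single
ordinal `β ∈ M`, so all of them lie in the transitive level `N = M_β ∈ M`. The graph of
`y ↦ A y` is then a subset of `Y × N` and the union a subset of `N`, and both belong to `M`
because `M` is closed under products and subsets.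
-/

section

variable {M : ZFSet}

theorem SubsetClosed.mem_of_subset (h : SubsetClosed M) {X S : ZFSet} (hX : X ∈ M)
    (hS : S ⊆ X) : S ∈ M :=
  h X hX (mem_powerset.2 hS)

theorem StronglyRegular.exists_bound (h : StronglyRegular M) {X : ZFSet} (hX : X ∈ M)
    (g : ZFSet → ZFSet) (hg : ∀ x ∈ X, IsOrd (g x) ∧ g x ∈ M) :
    ∃ β, IsOrd β ∧ β ∈ M ∧ ∀ x ∈ X, g x ∈ β := by
  let _ : Definable₁ g := Classical.allZFSetDefinable _
  obtain ⟨β, hβ, hβM, hbound⟩ := h X hX (map g X)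
    (fun p hp => by
      obtain ⟨x, hx, rfl⟩ := mem_map.1 hp
      exact ⟨x, hx, g x, (hg x hx).1, (hg x hx).2, rfl⟩)
    (fun x hx => ⟨g x, mem_map.2 ⟨x, hx, rfl⟩⟩)
    (fun x _ o o' ho ho' => by
      obtain ⟨z, -, hz⟩ := mem_map.1 ho
      obtain ⟨z', -, hz'⟩ := mem_map.1 ho'
      obtain ⟨rfl, rfl⟩ := pair_injective hz
      obtain ⟨rfl, rfl⟩ := pair_injective hz'
      rfl)
  exact ⟨β, hβ, hβM, fun x hx => hbound x hx (g x) (mem_map.2 ⟨x, hx, rfl⟩)⟩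

theorem Hierarchical.exists_transitive_forall_mem (hH : Hierarchical M)
    (hSR : StronglyRegular M) {Y : ZFSet} (hY : Y ∈ M) {A : ZFSet → ZFSet}
    (hA : ∀ y ∈ Y, A y ∈ M) : ∃ N ∈ M, N.IsTransitive ∧ ∀ y ∈ Y, A y ∈ N := by
  obtain ⟨F, hFlevel, hFmono, -, hFcover⟩ := hH
  choose! level hlevel using fun y (hy : y ∈ Y) => (hFcover (A y)).1 (hA y hy)
  obtain ⟨β, hβ, hβM, hbound⟩ :=
    hSR.exists_bound hY level fun y hy => ⟨(hlevel y hy).1, (hlevel y hy).2.1⟩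
  refine ⟨F β, (hFlevel β hβ hβM).2, (hFlevel β hβ hβM).1, fun y hy => ?_⟩
  obtain ⟨hord, hmem, hAy⟩ := hlevel y hy
  exact hFmono _ β hord hβ hmem hβM (hbound y hy) hAy

variable {Y N : ZFSet} {A : ZFSet → ZFSet} [Definable₁ A]

theorem map_mem (hPC : ProdClosed M) (hSC : SubsetClosed M) (hY : Y ∈ M) (hN : N ∈ M)
    (hA : ∀ y ∈ Y, A y ∈ N) : map A Y ∈ M :=
  hSC.mem_of_subset (hPC Y hY N hN) fun p hp => by
    obtain ⟨y, hy, rfl⟩ := mem_map.1 hp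
    exact pair_mem_prod.2 ⟨hy, hA y hy⟩

theorem sUnion_image_mem (hSC : SubsetClosed M) (hN : N ∈ M) (hNtr : N.IsTransitive)
    (hA : ∀ y ∈ Y, A y ∈ N) : ⋃₀ image A Y ∈ M :=
  hSC.mem_of_subset hN fun z hz => by
    obtain ⟨_, hx, hzx⟩ := mem_sUnion.1 hz
    obtain ⟨y, hy, rfl⟩ := mem_image.1 hx
    exact hNtr.subset_of_mem (hA y hy) hzx

end

theorem stmt4 (M Y : ZFSet) (hM : HLike M) (hSucc : SuccType M) (hY : Y ∈ M)
    (A : ZFSet → ZFSet) (hA : ∀ y ∈ Y, A y ∈ M) :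
    (∃ f ∈ M, ∀ p, p ∈ f ↔ ∃ y ∈ Y, p = ZFSet.pair y (A y)) ∧
    (∃ U ∈ M, ∀ z, z ∈ U ↔ ∃ y ∈ Y, z ∈ A y) := by
  obtain ⟨-, ⟨-, hPC, hSC⟩, hH, hSR⟩ := hM
  obtain ⟨N, hNM, hNtr, hAN⟩ := hH.exists_transitive_forall_mem (hSR hSucc) hY hA
  let _ : Definable₁ A := Classical.allZFSetDefinable _
  refine ⟨⟨map A Y, map_mem hPC hSC hY hNM hAN, fun p => ?_⟩,
    ⟨⋃₀ image A Y, sUnion_image_mem hSC hNM hNtr hAN, fun z => ?_⟩⟩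
  · simp only [mem_map, eq_comm]
  · simp only [mem_sUnion, mem_image]
    exact ⟨fun ⟨_, ⟨y, hy, rfl⟩, hz⟩ => ⟨y, hy, hz⟩, fun ⟨y, hy, hz⟩ => ⟨A y, ⟨y, hy, rfl⟩, hz⟩⟩

end NairianModels
end

section
/- If M is an H-like set of successor type and X ∈ M, then M is X-closed: X ∪ {X} ⊆ M, and every function from X into M (coded as a set of ordered pairs with domain X and values in M) is an element of M. -/
namespace NairianModels

open ZFSet

lemma isFunc_of_forall_exists_mem {X Y N f : ZFSet} (hf : IsFunc X Y f)
    (hN : ∀ x ∈ X, ∃ y ∈ N, pair x y ∈ f) : IsFunc X N f := by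
  refine ⟨fun p hp => ?_, hf.2⟩
  obtain ⟨x, hx, y, -, rfl⟩ := mem_prod.1 (hf.1 hp)
  obtain ⟨y', hy'N, hy'⟩ := hN x hx
  rw [(hf.2 x hx).unique hp hy']
  exact pair_mem_prod.2 ⟨hx, hy'N⟩

lemma mem_of_isFunc {M X N f : ZFSet} (hProd : ProdClosed M) (hSub : SubsetClosed M)
    (hX : X ∈ M) (hN : N ∈ M) (hf : IsFunc X N f) : f ∈ M :=
  hSub _ (hProd X hX N hN) (mem_powerset.2 hf.1)

section

attribute [local instance] Classical.allZFSetDefinable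

lemma StronglyRegular.exists_ord_bound {M : ZFSet} (hM : StronglyRegular M) {X : ZFSet}
    (hX : X ∈ M) {o : ZFSet → ZFSet} (ho : ∀ x ∈ X, IsOrd (o x) ∧ o x ∈ M) :
    ∃ β, IsOrd β ∧ β ∈ M ∧ ∀ x ∈ X, o x ∈ β := by
  obtain ⟨β, hβ, hβM, hbound⟩ := hM X hX (map o X)
    (fun p hp => by
      obtain ⟨x, hx, rfl⟩ := mem_map.1 hp
      exact ⟨x, hx, o x, (ho x hx).1, (ho x hx).2, rfl⟩)
    (fun x hx => ⟨o x, mem_map.2 ⟨x, hx, rfl⟩⟩)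
    (fun x hx _ _ h h' => (map_unique hx).unique h h')
  exact ⟨β, hβ, hβM, fun x hx => hbound x hx (o x) (mem_map.2 ⟨x, hx, rfl⟩)⟩

end

/-- Strong regularity bounds the levels of the hierarchy at which the members of the family
appear, so they all lie in one level. -/
lemma Hierarchical.exists_mem_forall_mem {M : ZFSet} (hH : Hierarchical M)
    (hR : StronglyRegular M) {X : ZFSet} (hX : X ∈ M) {g : ZFSet → ZFSet}
    (hg : ∀ x ∈ X, g x ∈ M) : ∃ N ∈ M, ∀ x ∈ X, g x ∈ N := by
  obtain ⟨F, hFmem, hFmono, -, hFcover⟩ := hH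
  choose! o hoOrd hoM hgo using fun x hx => (hFcover (g x)).1 (hg x hx)
  obtain ⟨β, hβ, hβM, hoβ⟩ := hR.exists_ord_bound hX fun x hx => ⟨hoOrd x hx, hoM x hx⟩
  exact ⟨F β, (hFmem β hβ hβM).2, fun x hx =>
    hFmono _ _ (hoOrd x hx) hβ (hoM x hx) hβM (hoβ x hx) (hgo x hx)⟩

theorem stmt5 (M X : ZFSet) (hM : HLike M) (hSucc : SuccType M) (hX : X ∈ M) :
    XClosed X M := by
  obtain ⟨hMtrans, ⟨-, hProd, hSub⟩, hH, hR⟩ := hM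
  refine ⟨hMtrans.subset_of_mem hX, hX, fun f hf => ?_⟩
  choose! g hg using fun x hx => (hf.2 x hx).exists
  obtain ⟨N, hNM, hgN⟩ := hH.exists_mem_forall_mem (hR hSucc) hX
    fun x hx => (pair_mem_prod.1 (hf.1 (hg x hx))).2
  exact mem_of_isFunc hProd hSub hX hNM
    (isFunc_of_forall_exists_mem hf fun x hx => ⟨g x, hgN x hx, hg x hx⟩)

end NairianModels
end

section
/- For all ordinals α ≤ β, the level N_α of the N-hierarchy is a transitive set, and N_α ⊆ N_β. -/
/-! A surjection from `X` onto the transitive closure of `{Z}` restricts to one onto the smaller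
transitive closure of `{Y}` for any `Y ∈ Z`, so every class `H_X`, hence every successor level, is
transitive; limit levels are unions of transitive sets. A transitive set `M` lies inside `H_M` and
inside `H_{𝒫(M)}`, which gives `N_α ⊆ N_{α+1}`; at limits inclusion is immediate. -/

namespace NairianModels

open ZFSet

lemma iterUnion_subset_of_isTransitive {x M : ZFSet} (hM : M.IsTransitive) (hx : x ⊆ M) :
    ∀ n, iterUnion x n ⊆ M
  | 0 => hx
  | n + 1 => fun _ hz => by
    obtain ⟨y, hy, hzy⟩ := ZFSet.mem_sUnion.1 hz
    exact hM.mem_trans hzy (iterUnion_subset_of_isTransitive hM hx n hy)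

lemma subset_transCl (x : ZFSet) : x ⊆ transCl x :=
  fun _ hy => ZFSet.mem_sUnion.2 ⟨iterUnion x 0, ZFSet.mem_range.2 ⟨0, rfl⟩, hy⟩

lemma mem_transCl_singleton (Y : ZFSet) : Y ∈ transCl {Y} :=
  subset_transCl _ (ZFSet.mem_singleton.2 rfl)

lemma isTransitive_transCl (x : ZFSet) : (transCl x).IsTransitive := by
  intro y hy z hz
  obtain ⟨w, hw, hyw⟩ := ZFSet.mem_sUnion.1 hy
  obtain ⟨n, rfl⟩ := ZFSet.mem_range.1 hw
  exact ZFSet.mem_sUnion.2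
    ⟨iterUnion x (n + 1), ZFSet.mem_range.2 ⟨n + 1, rfl⟩, ZFSet.mem_sUnion.2 ⟨y, hyw, hz⟩⟩

lemma transCl_subset_of_isTransitive {x M : ZFSet} (hM : M.IsTransitive) (hx : x ⊆ M) :
    transCl x ⊆ M := by
  intro z hz
  obtain ⟨w, hw, hzw⟩ := ZFSet.mem_sUnion.1 hz
  obtain ⟨n, rfl⟩ := ZFSet.mem_range.1 hw
  exact iterUnion_subset_of_isTransitive hM hx n hzw

lemma transCl_singleton_subset {Y M : ZFSet} (hM : M.IsTransitive) (hY : Y ∈ M) :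
    transCl {Y} ⊆ M :=
  transCl_subset_of_isTransitive hM fun _ hz => ZFSet.mem_singleton.1 hz ▸ hY

lemma exists_zfSurj_self (X : ZFSet) : ∃ f, ZFSurj X X f := by
  let : ZFSet.Definable₁ id := Classical.allZFSetDefinable _
  exact ⟨ZFSet.map id X, ZFSet.map_isFunc.2 fun _ hx => hx,
    fun y hy => ⟨y, hy, ZFSet.mem_map.2 ⟨y, hy, rfl⟩⟩⟩

/-- Follow `f` and retract its values into `S`, sending those outside `S` to `s₀`. -/
lemma ZFSurj.exists_zfSurj_of_subset {X T S f s₀ : ZFSet} (hf : ZFSurj X T f) (hST : S ⊆ T)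
    (hs₀ : s₀ ∈ S) : ∃ g, ZFSurj X S g := by
  classical
  let r : ZFSet → ZFSet := fun x =>
    if hx : ∃ y, y ∈ S ∧ ZFSet.pair x y ∈ f then hx.choose else s₀
  let : ZFSet.Definable₁ r := Classical.allZFSetDefinable _
  refine ⟨ZFSet.map r X, ZFSet.map_isFunc.2 fun x _ => ?_, fun y hy => ?_⟩
  · by_cases hx : ∃ y, y ∈ S ∧ ZFSet.pair x y ∈ f
    · simpa only [r, dif_pos hx] using hx.choose_spec.1
    · simpa only [r, dif_neg hx] using hs₀
  · obtain ⟨x, hxX, hxy⟩ := hf.2 y (hST hy)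
    have hx : ∃ y, y ∈ S ∧ ZFSet.pair x y ∈ f := ⟨y, hy, hxy⟩
    have hrx : r x = y := by
      obtain ⟨_, _, huniq⟩ := hf.1.2 x hxX
      simp only [r, dif_pos hx]
      rw [huniq _ hx.choose_spec.2, huniq _ hxy]
    exact ⟨x, hxX, hrx ▸ ZFSet.mem_map.2 ⟨x, hxX, rfl⟩⟩

lemma memH_of_transCl_subset {X Y : ZFSet} (h : transCl {Y} ⊆ X) : MemH X Y :=
  have ⟨_, hid⟩ := exists_zfSurj_self X
  hid.exists_zfSurj_of_subset h (mem_transCl_singleton Y)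

lemma MemH.of_mem {X Y Z : ZFSet} (hZ : MemH X Z) (hY : Y ∈ Z) : MemH X Y := by
  obtain ⟨f, hf⟩ := hZ
  have hYZ : Y ∈ transCl {Z} := (isTransitive_transCl _).mem_trans hY (mem_transCl_singleton Z)
  exact hf.exists_zfSurj_of_subset (transCl_singleton_subset (isTransitive_transCl _) hYZ)
    (mem_transCl_singleton Y)

lemma isTransitive_of_forall_mem_iff_memH {X W : ZFSet} (hW : ∀ Y, Y ∈ W ↔ MemH X Y) :
    W.IsTransitive :=
  fun Z hZ Y hY => (hW Y).2 (((hW Z).1 hZ).of_mem hY)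

lemma HFin.of_mem {x y : ZFSet} (hx : HFin x) (hy : y ∈ x) : HFin y := by
  unfold HFin at hx ⊢
  rw [ZFSet.mem_wf.fix_eq] at hx
  exact hx.2 y hy

namespace IsNHierarchy

variable {F : Ordinal → ZFSet} (hF : IsNHierarchy F)
include hF

/-- Every successor level is an `H_X`, for an `X` that contains the previous level whenever
that level is transitive: `X = F α` at successors of `0` and of successors, `X = 𝒫(F α)` at
successors of limits. -/
lemma exists_forall_mem_succ_iff_memH (α : Ordinal) :
    ∃ X, (∀ Y, Y ∈ F (α + 1) ↔ MemH X Y) ∧ ((F α).IsTransitive → F α ⊆ X) := by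
  obtain ⟨-, h1, h2, hlim⟩ := hF
  rcases Ordinal.zero_or_succ_or_isSuccLimit α with rfl | ⟨β, rfl⟩ | hα
  · exact ⟨F 0, by simpa using h1, fun _ => le_rfl⟩
  · refine ⟨F (β + 1), ?_, fun _ => le_rfl⟩
    rw [Order.succ_eq_add_one, add_assoc, one_add_one_eq_two]
    exact h2 β
  · exact ⟨ZFSet.powerset (F α), (hlim α hα).2, ZFSet.IsTransitive.subset_powerset⟩

lemma isTransitive (α : Ordinal) : (F α).IsTransitive := by
  induction α using Ordinal.limitRecOn with
  | zero => exact fun Z hZ Y hY => (hF.1 Y).2 (((hF.1 Z).1 hZ).of_mem hY)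
  | add_one α _ =>
    obtain ⟨X, hX, -⟩ := hF.exists_forall_mem_succ_iff_memH α
    exact isTransitive_of_forall_mem_iff_memH hX
  | limit α hα IH =>
    intro Z hZ Y hY
    obtain ⟨β, hβα, hZβ⟩ := ((hF.2.2.2 α hα).1 Z).1 hZ
    exact ((hF.2.2.2 α hα).1 Y).2 ⟨β, hβα, IH β hβα Z hZβ hY⟩

lemma subset_succ (α : Ordinal) : F α ⊆ F (α + 1) := by
  obtain ⟨X, hX, hαX⟩ := hF.exists_forall_mem_succ_iff_memH α
  have hα := hF.isTransitive α
  exact fun Y hY => (hX Y).2 <|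
    memH_of_transCl_subset ((transCl_singleton_subset hα hY).trans (hαX hα))

lemma subset_of_le {α β : Ordinal} (hαβ : α ≤ β) : F α ⊆ F β := by
  induction β using Ordinal.limitRecOn with
  | zero => rw [nonpos_iff_eq_zero.1 hαβ]
  | add_one β IH =>
    rcases Order.le_succ_iff_eq_or_le.1 ((Order.succ_eq_add_one β).symm ▸ hαβ) with h | h
    · rw [h, Order.succ_eq_add_one]
    · exact (IH h).trans (hF.subset_succ β)
  | limit β hβ _ =>
    rcases hαβ.eq_or_lt with rfl | h
    · exact le_rfl
    · exact fun Y hY => ((hF.2.2.2 β hβ).1 Y).2 ⟨α, h, hY⟩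

end IsNHierarchy

theorem stmt9 (F : Ordinal → ZFSet) (hF : IsNHierarchy F) :
    ∀ α β : Ordinal, α ≤ β → (F α).IsTransitive ∧ F α ⊆ F β :=
  fun α _ hαβ => ⟨hF.isTransitive α, hF.subset_of_le hαβ⟩

end NairianModels
end
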